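/- Let F(n) be the n-th Fibonacci number. Then the limit L = lim_{n→∞} F(11^n) exists in ℤ_11, is nonzero, and satisfies 5L^2 + 5L + 1 = 0. -/

import Mathlib

/-!
Over `ℤ_[11]` the polynomial `X² - X - 1` has roots `φ ≡ 8` and `ψ = 1 - φ ≡ 4`, and Binet's
formula `F(n) (φ - ψ) = φⁿ - ψⁿ` holds there. The powers `x ^ 11ⁿ` converge to the Teichmüller
representative `ω(x)`, which is multiplicative and depends only on `x` mod 11. Hence
`ω(φ) ω(ψ) = ω(-1) = -1` and `ω(ψ)⁵ = ω(1) = 1`, so `η = ω(ψ)` is a primitive fifth root of unity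
and `ω(φ) - ω(ψ) = -(η + η⁴)` is a root of `X² + X - 1`; comparing residues, it equals `ψ`.
So `L = ψ / (φ - ψ)`, and `(φ - ψ)² = 5` turns `5L² + 5L + 1 = 0` into `φ² = φ + 1`.
-/

open Filter Topology

instance : Fact (Nat.Prime 11) := ⟨by norm_num⟩

open Polynomial

namespace PadicInt

variable {p : ℕ} [Fact p.Prime]

theorem toZMod_eq_zero_iff_norm_lt_one {x : ℤ_[p]} : toZMod x = 0 ↔ ‖x‖ < 1 := by
  rw [← RingHom.mem_ker, ker_toZMod, IsLocalRing.mem_maximalIdeal, mem_nonunits]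

theorem toZMod_eq_toZMod_iff_norm_sub_lt_one {x y : ℤ_[p]} :
    toZMod x = toZMod y ↔ ‖x - y‖ < 1 := by
  rw [← toZMod_eq_zero_iff_norm_lt_one, map_sub, sub_eq_zero]

theorem norm_eq_one_iff_toZMod_ne_zero {x : ℤ_[p]} : ‖x‖ = 1 ↔ toZMod x ≠ 0 := by
  rw [ne_eq, toZMod_eq_zero_iff_norm_lt_one, not_lt]
  exact ⟨ge_of_eq, (norm_le_one x).antisymm⟩

theorem exists_eval_eq_zero_of_toZMod {F : ℤ_[p][X]} {a : ℤ_[p]}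
    (hF : toZMod (F.eval a) = 0) (hF' : toZMod (F.derivative.eval a) ≠ 0) :
    ∃ z, F.eval z = 0 ∧ toZMod z = toZMod a := by
  rw [toZMod_eq_zero_iff_norm_lt_one] at hF
  rw [← norm_eq_one_iff_toZMod_ne_zero] at hF'
  obtain ⟨z, hz, hza, -⟩ := hensels_lemma (F := F) (a := a)
    (by simpa only [coe_aeval_eq_eval, hF', one_pow] using hF)
  simp only [coe_aeval_eq_eval, hF'] at hz hza
  exact ⟨z, hz, toZMod_eq_toZMod_iff_norm_sub_lt_one.2 hza⟩

theorem norm_pow_prime_pow_sub_pow_le {x y : ℤ_[p]} (h : toZMod x = toZMod y) (n : ℕ) :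
    ‖x ^ p ^ n - y ^ p ^ n‖ ≤ (p : ℝ)⁻¹ ^ (n + 1) := by
  have hdvd : (p : ℤ_[p]) ∣ x - y :=
    (norm_lt_one_iff_dvd _).1 (toZMod_eq_toZMod_iff_norm_sub_lt_one.1 h)
  rw [inv_pow, ← zpow_natCast, ← zpow_neg, norm_le_pow_iff_mem_span_pow,
    Ideal.mem_span_singleton]
  exact dvd_sub_pow_of_dvd_sub hdvd n

theorem tendsto_pow_prime_pow_sub_pow {x y : ℤ_[p]} (h : toZMod x = toZMod y) :
    Tendsto (fun n ↦ x ^ p ^ n - y ^ p ^ n) atTop (𝓝 0) := by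
  have hp : (p : ℝ)⁻¹ < 1 := inv_lt_one_of_one_lt₀ (mod_cast (Fact.out : p.Prime).one_lt)
  exact squeeze_zero_norm (norm_pow_prime_pow_sub_pow_le h)
    ((tendsto_pow_atTop_nhds_zero_of_lt_one (by positivity) hp).comp (tendsto_add_atTop_nat 1))

theorem cauchySeq_pow_prime_pow (x : ℤ_[p]) : CauchySeq fun n ↦ x ^ p ^ n := by
  refine cauchySeq_of_le_geometric (p : ℝ)⁻¹ (p : ℝ)⁻¹
    (inv_lt_one_of_one_lt₀ (mod_cast (Fact.out : p.Prime).one_lt)) fun n ↦ ?_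
  have hFermat : toZMod (x ^ p) = toZMod x := by rw [map_pow, ZMod.pow_card]
  rw [dist_comm, dist_eq_norm, pow_succ', pow_mul, ← pow_succ']
  exact norm_pow_prime_pow_sub_pow_le hFermat n

noncomputable def teichmuller (x : ℤ_[p]) : ℤ_[p] :=
  limUnder atTop fun n ↦ x ^ p ^ n

theorem tendsto_pow_prime_pow_teichmuller (x : ℤ_[p]) :
    Tendsto (fun n ↦ x ^ p ^ n) atTop (𝓝 (teichmuller x)) :=
  (cauchySeq_pow_prime_pow x).tendsto_limUnder

theorem teichmuller_eq_of_toZMod_eq {x y : ℤ_[p]} (h : toZMod x = toZMod y) :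
    teichmuller x = teichmuller y :=
  sub_eq_zero.1 <| tendsto_nhds_unique
    ((tendsto_pow_prime_pow_teichmuller x).sub (tendsto_pow_prime_pow_teichmuller y))
    (tendsto_pow_prime_pow_sub_pow h)

theorem teichmuller_of_pow_eq_self {x : ℤ_[p]} (hx : x ^ p = x) : teichmuller x = x := by
  have hconst : ∀ n, x ^ p ^ n = x := by
    intro n
    induction n with
    | zero => rw [pow_zero, pow_one]
    | succ n ih => rw [pow_succ, pow_mul, ih, hx]
  refine tendsto_nhds_unique (tendsto_pow_prime_pow_teichmuller x) ?_
  simp only [hconst, tendsto_const_nhds]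

theorem teichmuller_mul (x y : ℤ_[p]) :
    teichmuller (x * y) = teichmuller x * teichmuller y :=
  tendsto_nhds_unique (tendsto_pow_prime_pow_teichmuller (x * y)) <| by
    simpa only [mul_pow] using
      (tendsto_pow_prime_pow_teichmuller x).mul (tendsto_pow_prime_pow_teichmuller y)

theorem teichmuller_pow (x : ℤ_[p]) (k : ℕ) : teichmuller (x ^ k) = teichmuller x ^ k :=
  tendsto_nhds_unique (tendsto_pow_prime_pow_teichmuller (x ^ k)) <| by
    simpa only [pow_right_comm x k] using (tendsto_pow_prime_pow_teichmuller x).pow k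

theorem toZMod_teichmuller (x : ℤ_[p]) : toZMod (teichmuller x) = toZMod x := by
  obtain ⟨n, hn⟩ := ((tendsto_pow_prime_pow_teichmuller x).eventually
    (Metric.ball_mem_nhds _ one_pos)).exists
  rw [← toZMod_eq_toZMod_iff_norm_sub_lt_one.2 (mem_ball_iff_norm.1 hn), map_pow, ZMod.pow_card_pow]

end PadicInt

theorem Nat.fib_mul_sub_eq_pow_sub_pow {R : Type*} [CommRing R] {φ ψ : R}
    (hsum : φ + ψ = 1) (hprod : φ * ψ = -1) (n : ℕ) :
    (Nat.fib n : R) * (φ - ψ) = φ ^ n - ψ ^ n := by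
  induction n using Nat.twoStepInduction with
  | zero => simp
  | one => simp
  | more n ih₁ ih₂ =>
    rw [Nat.fib_add_two, Nat.cast_add, add_mul, ih₁, ih₂]
    linear_combination (ψ ^ n * ψ - φ ^ n * φ) * hsum + (φ ^ n - ψ ^ n) * hprod

open PadicInt

theorem exists_sq_eq_add_one_toZMod_eq_eight :
    ∃ φ : ℤ_[11], φ ^ 2 = φ + 1 ∧ toZMod φ = 8 := by
  obtain ⟨φ, hφ, h8⟩ := exists_eval_eq_zero_of_toZMod (p := 11) (F := X ^ 2 - X - 1) (a := 8)
    (by simp only [eval_sub, eval_pow, eval_X, eval_one, map_sub, map_pow, map_one, map_ofNat]; decide)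
    (by simp only [derivative_X_pow, derivative_X, derivative_one, eval_sub,
          eval_mul, eval_pow, eval_X, eval_one, eval_natCast, sub_zero, map_sub,
          map_mul, map_pow, map_one, map_natCast, map_ofNat]; decide)
  simp only [eval_sub, eval_pow, eval_X, eval_one] at hφ
  exact ⟨φ, by linear_combination hφ, by rw [h8, map_ofNat]⟩

theorem teichmuller_sub_teichmuller_one_sub {φ : ℤ_[11]} (hφ : φ ^ 2 = φ + 1)
    (h8 : toZMod φ = 8) : teichmuller φ - teichmuller (1 - φ) = 1 - φ := by
  set ψ := 1 - φ
  set ζ := teichmuller φ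
  set η := teichmuller ψ
  have hψ : toZMod ψ = 4 := by rw [map_sub, map_one, h8]; decide
  have hη : toZMod η = 4 := by rw [toZMod_teichmuller, hψ]
  have hζη : ζ * η = -1 := by
    rw [← teichmuller_mul, show φ * ψ = -1 by linear_combination -hφ]
    exact teichmuller_of_pow_eq_self (by norm_num)
  have hη5 : η ^ 5 = 1 := by
    rw [← teichmuller_pow, teichmuller_eq_of_toZMod_eq (y := 1) (by
      rw [map_pow, hψ, map_one]; decide)]
    exact teichmuller_of_pow_eq_self (one_pow _)
  have hη1 : η - 1 ≠ 0 := fun h ↦ by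
    have := congrArg toZMod h
    rw [map_sub, map_one, hη, map_zero] at this
    exact absurd this (by decide)
  have hcyc : η ^ 4 + η ^ 3 + η ^ 2 + η + 1 = 0 :=
    mul_left_cancel₀ hη1 (by linear_combination hη5)
  -- `η + η⁴` is a root of `X² + X - 1`, whose roots are `-ψ` and `-φ`
  have hroot : (η + η ^ 4 + ψ) * (η + η ^ 4 + φ) = 0 := by
    linear_combination hcyc + (2 + η ^ 3) * hη5 - hφ
  have hφ' : η + η ^ 4 + φ ≠ 0 := fun h ↦ by
    have := congrArg toZMod h
    rw [map_add, map_add, map_pow, hη, h8, map_zero] at this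
    exact absurd this (by decide)
  linear_combination -(mul_eq_zero.1 hroot).resolve_right hφ' - ζ * hη5 + η ^ 4 * hζη

/-- The limit `L = lim_{n→∞} F(11^n)` exists in `ℤ_11`, is nonzero, and satisfies
`5L² + 5L + 1 = 0`. -/
theorem stmt_11 :
    ∃ L : ℤ_[11], Tendsto (fun n : ℕ => ((Nat.fib (11 ^ n) : ℕ) : ℤ_[11])) atTop (𝓝 L) ∧
      L ≠ 0 ∧ 5 * L ^ 2 + 5 * L + 1 = 0 := by
  obtain ⟨φ, hφ, h8⟩ := exists_sq_eq_add_one_toZMod_eq_eight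
  set s := φ - (1 - φ)
  have hs : ‖s‖ = 1 := by
    rw [norm_eq_one_iff_toZMod_ne_zero, map_sub, map_sub, map_one, h8]; decide
  have hinv : s * s.inv = 1 := mul_inv hs
  refine ⟨(1 - φ) * s.inv, ?_, ?_, ?_⟩
  · have hlim := ((tendsto_pow_prime_pow_teichmuller φ).sub
      (tendsto_pow_prime_pow_teichmuller (1 - φ))).mul_const s.inv
    rw [teichmuller_sub_teichmuller_one_sub hφ h8] at hlim
    refine hlim.congr fun n ↦ ?_
    rw [← Nat.fib_mul_sub_eq_pow_sub_pow (add_sub_cancel φ 1) (by linear_combination -hφ),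
      mul_assoc, hinv, mul_one]
  · refine mul_ne_zero (fun h ↦ ?_) (right_ne_zero_of_mul_eq_one hinv)
    have := congrArg toZMod h
    rw [map_sub, map_one, h8, map_zero] at this
    exact absurd this (by decide)
  · linear_combination ((1 - φ) ^ 2 * (s * s.inv + 1) + s * (1 - φ)) * hinv
      - (4 * ((1 - φ) ^ 2 * s.inv ^ 2 + (1 - φ) * s.inv) + 1) * hφ
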